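/- Let δ, δ̃ lie in the same connected component (chamber) of M_ℝ^W \ 𝓗^W. Then 𝒞_δ = 𝒞_{δ̃}, and moreover (δ + (1/2)Σ) ∩ (M^+ + ρ) = (δ̃ + (1/2)Σ) ∩ (M^+ + ρ). -/

import Mathlib

/-!
A lattice point `m` lies in `γ + ∇` iff `-γ + m ∈ ∇`. As `γ` moves through a connected set `C`
on which `m` never meets the boundary `∂(γ + ∇)`, the points `-γ + m` sweep out a connected set
avoiding `∂∇`, which therefore lies entirely inside `∇` or entirely outside it. Hence `𝒞_γ` is
constant on `C`, and the second equality is the first one translated by `ρ`, via the description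
of `∇` on the dominant cone.
-/

open scoped Pointwise

noncomputable section

variable {V : Type} [NormedAddCommGroup V] [NormedSpace ℝ V]

/-- The polytope `(1/2)Σ` translated to `γ`, where `Σ = { Σ a_i β_i : a_i ∈ [0,1] }`. -/
def halfSigma {d : ℕ} (β : Fin d → V) (γ : V) : Set V :=
  {x | ∃ a : Fin d → ℝ, (∀ i, a i ∈ Set.Icc (0 : ℝ) 1) ∧
    x = γ + (2⁻¹ : ℝ) • ∑ i, a i • β i}

open Set

theorem IsPreconnected.subset_or_disjoint_of_disjoint_frontier {X : Type*} [TopologicalSpace X]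
    {s t : Set X} (hs : IsPreconnected s) (h : Disjoint s (frontier t)) :
    s ⊆ t ∨ Disjoint s t := by
  have hcover : s ⊆ interior t ∪ (closure t)ᶜ := fun x hx => by
    by_cases hx' : x ∈ interior t
    · exact Or.inl hx'
    · exact Or.inr fun hcl => h.notMem_of_mem_left hx ⟨hcl, hx'⟩
  have hdisj : Disjoint (interior t) (closure t)ᶜ :=
    disjoint_compl_right_iff_subset.mpr (interior_subset.trans subset_closure)
  rcases hs.subset_or_subset isOpen_interior isClosed_closure.isOpen_compl hdisj hcover with
    hint | hext
  · exact Or.inl (hint.trans interior_subset)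
  · exact Or.inr ((disjoint_compl_left_iff_subset.mpr subset_closure).mono_left hext)

theorem frontier_vadd {α G : Type*} [TopologicalSpace α] [AddGroup G] [AddAction G α]
    [ContinuousConstVAdd G α] (c : G) (s : Set α) : frontier (c +ᵥ s) = c +ᵥ frontier s := by
  simp only [frontier, closure_vadd, interior_vadd, vadd_set_sdiff]

section TopologicalAddGroup

variable {G : Type*} [AddGroup G] [TopologicalSpace G] [IsTopologicalAddGroup G]

theorem mem_vadd_set_iff_of_isPreconnected {S C : Set G} {m γ₁ γ₂ : G} (hC : IsPreconnected C)
    (hoff : ∀ γ ∈ C, m ∉ frontier (γ +ᵥ S)) (hγ₁ : γ₁ ∈ C) (hγ₂ : γ₂ ∈ C) :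
    m ∈ γ₁ +ᵥ S ↔ m ∈ γ₂ +ᵥ S := by
  let f : G → G := fun γ => -γ + m
  have hf : Continuous f := continuous_neg.add continuous_const
  have hdisj : Disjoint (f '' C) (frontier S) := by
    refine disjoint_left.mpr ?_
    rintro _ ⟨γ, hγ, rfl⟩
    simpa only [frontier_vadd, mem_vadd_set_iff_neg_vadd_mem, vadd_eq_add] using hoff γ hγ
  simp only [mem_vadd_set_iff_neg_vadd_mem, vadd_eq_add]
  rcases (hC.image f hf.continuousOn).subset_or_disjoint_of_disjoint_frontier hdisj with
    hin | hout
  · exact iff_of_true (hin (mem_image_of_mem f hγ₁)) (hin (mem_image_of_mem f hγ₂))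
  · exact iff_of_false (hout.notMem_of_mem_left (mem_image_of_mem f hγ₁))
      (hout.notMem_of_mem_left (mem_image_of_mem f hγ₂))

theorem vadd_set_inter_eq_of_isPreconnected {S C L A : Set G} {γ₁ γ₂ : G}
    (hC : IsPreconnected C) (hoff : ∀ γ ∈ C, ∀ x ∈ frontier (γ +ᵥ S), x ∉ L) (hA : A ⊆ L)
    (hγ₁ : γ₁ ∈ C) (hγ₂ : γ₂ ∈ C) : (γ₁ +ᵥ S) ∩ A = (γ₂ +ᵥ S) ∩ A := by
  ext m
  refine and_congr_left fun hm => ?_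
  exact mem_vadd_set_iff_of_isPreconnected hC (fun γ hγ hfr => hoff γ hγ m hfr (hA hm)) hγ₁ hγ₂

end TopologicalAddGroup

theorem inter_vadd_set_eq_vadd_set_inter {G : Type*} [AddGroup G] {S T D A : Set G} {ρ : G}
    (h : S ∩ D = {x | ρ + x ∈ T} ∩ D) (hA : A ⊆ D) : T ∩ (ρ +ᵥ A) = ρ +ᵥ (S ∩ A) := by
  ext y
  simp only [mem_inter_iff, mem_vadd_set_iff_neg_vadd_mem, vadd_eq_add]
  refine ⟨fun ⟨hy, hyA⟩ => ⟨?_, hyA⟩, fun ⟨hyS, hyA⟩ => ⟨?_, hyA⟩⟩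
  · refine ((Set.ext_iff.mp h _).mpr ⟨?_, hA hyA⟩).1
    simpa only [mem_ofPred_eq, add_neg_cancel_left] using hy
  · simpa only [mem_ofPred_eq, add_neg_cancel_left] using ((Set.ext_iff.mp h _).mp ⟨hyS, hA hyA⟩).1

theorem statement17_general {d : ℕ} (β : Fin d → V)
    (M : AddSubgroup V) (Cdom : Set V) (Mplus : Set V)
    (hMplus : Mplus = (M : Set V) ∩ Cdom)
    (ρ : V)
    (nabla : Set V)
    (Mw : Submodule ℝ V)
    (hnablaSigma : ∀ γ ∈ Mw,
      ((γ +ᵥ nabla) ∩ Cdom) = {x | ρ + x ∈ halfSigma β γ} ∩ Cdom)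
    (δ δtilde : V) (hδ : δ ∈ Mw) (hδtilde : δtilde ∈ Mw)
    (C : Set V) (hC : IsConnected C)
    (hCoff : ∀ γ ∈ C, ∀ x ∈ frontier (γ +ᵥ nabla), x ∉ (M : Set V))
    (hδC : δ ∈ C) (hδtildeC : δtilde ∈ C) :
    (δ +ᵥ nabla) ∩ Mplus = (δtilde +ᵥ nabla) ∩ Mplus ∧
    halfSigma β δ ∩ (ρ +ᵥ Mplus) = halfSigma β δtilde ∩ (ρ +ᵥ Mplus) := by
  have hchamber : (δ +ᵥ nabla) ∩ Mplus = (δtilde +ᵥ nabla) ∩ Mplus :=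
    vadd_set_inter_eq_of_isPreconnected hC.isPreconnected hCoff
      (hMplus ▸ inter_subset_left) hδC hδtildeC
  have hdom : Mplus ⊆ Cdom := hMplus ▸ inter_subset_right
  refine ⟨hchamber, ?_⟩
  rw [inter_vadd_set_eq_vadd_set_inter (hnablaSigma δ hδ) hdom,
    inter_vadd_set_eq_vadd_set_inter (hnablaSigma δtilde hδtilde) hdom, hchamber]

/-- Let `δ, δ̃` lie in the same chamber of `M_ℝ^W ∖ 𝓗^W` (i.e. they lie in
a common connected subset of the `W`-fixed points avoiding the wall system, the latter being
characterized by: a point `γ` is off `𝓗^W` iff `∂(γ + ∇)` contains no lattice point).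
Then `𝒞_δ = 𝒞_{δ̃}`, and moreover
`(δ + (1/2)Σ) ∩ (M^+ + ρ) = (δ̃ + (1/2)Σ) ∩ (M^+ + ρ)`.

Here `M` is the weight lattice, `Cdom` the (real) dominant cone, `M^+ = M ∩ Cdom` the set of
dominant weights, `ρ` the half sum of positive roots, `𝒞_γ = (γ + ∇) ∩ M^+`, and the
magic-window polytope `∇` satisfies `(γ + ∇) ∩ M_ℝ^+ = (γ - ρ + (1/2)Σ) ∩ M_ℝ^+` for all
`W`-fixed `γ`. -/
theorem statement17 {d : ℕ} (β : Fin d → V)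
    (M : AddSubgroup V) (Cdom : Set V) (Mplus : Set V)
    (hMplus : Mplus = (M : Set V) ∩ Cdom)
    (ρ : V)
    (nabla : Set V) (hconv : Convex ℝ nabla) (hcomp : IsCompact nabla)
    (Mw : Submodule ℝ V)
    (hnablaSigma : ∀ γ ∈ Mw,
      ((γ +ᵥ nabla) ∩ Cdom) = {x | ρ + x ∈ halfSigma β γ} ∩ Cdom)
    (δ δtilde : V) (hδ : δ ∈ Mw) (hδtilde : δtilde ∈ Mw)
    (C : Set V) (hC : IsConnected C) (hCsub : C ⊆ (Mw : Set V))
    (hCoff : ∀ γ ∈ C, ∀ x ∈ frontier (γ +ᵥ nabla), x ∉ (M : Set V))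
    (hδC : δ ∈ C) (hδtildeC : δtilde ∈ C) :
    (δ +ᵥ nabla) ∩ Mplus = (δtilde +ᵥ nabla) ∩ Mplus ∧
    halfSigma β δ ∩ (ρ +ᵥ Mplus) = halfSigma β δtilde ∩ (ρ +ᵥ Mplus) :=
  statement17_general β M Cdom Mplus hMplus ρ nabla Mw hnablaSigma δ δtilde hδ hδtilde C hC hCoff
    hδC hδtildeC
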